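/- Let Q be a query on a λ-graph G. The propagation Q↓ is an open bisimulation if and only if the spreading Q⇓ is a sharing equivalence. -/
import Mathlib


/-- Directions for paths in a λ-graph. -/
inductive Dir : Type where
  | left | body | right
deriving DecidableEq

/-- Labels of nodes of a (pre–)λ-graph. -/
inductive NodeLabel (Node Name : Type) : Type where
  | app (l r : Node)
  | abs (body : Node)
  | fvar (name : Name)
  | bvar (binder : Node)

/-- The four kinds of nodes. -/
inductive NodeKind : Type where
  | app | abs | fvar | bvar
deriving DecidableEq

/-- The kind of a node label. -/
def NodeLabel.kind {Node Name : Type} : NodeLabel Node Name → NodeKind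
  | .app _ _ => .app
  | .abs _ => .abs
  | .fvar _ => .fvar
  | .bvar _ => .bvar

/-- Locally nameless λ-terms. -/
inductive Term (Name : Type) : Type where
  | bvar (i : ℕ)
  | fvar (a : Name)
  | app (t s : Term Name)
  | lam (t : Term Name)

/-- Reflexive–symmetric–transitive closure `R*` of a relation. -/
inductive RstClosure {α : Type _} (R : α → α → Prop) : α → α → Prop where
  | base {a b : α} : R a b → RstClosure R a b
  | refl (a : α) : RstClosure R a a
  | symm {a b : α} : RstClosure R a b → RstClosure R b a
  | trans {a b c : α} : RstClosure R a b → RstClosure R b c → RstClosure R a c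

/-- A pre–λ-graph: every node carries a label; the binder of a bound variable node is an
abstraction node; the name of a free variable node uniquely identifies it. -/
structure PreLamGraph (Node Name : Type) : Type where
  label : Node → NodeLabel Node Name
  binder_abs : ∀ n l, label n = .bvar l → ∃ b, label l = .abs b
  fvar_inj : ∀ n m a, label n = .fvar a → label m = .fvar a → n = m

namespace PreLamGraph

variable {Node Name : Type}

/-- `Path G τ n m`: there is a path from `n` to `m` with trace `τ`
(binding edges are never followed). -/
inductive Path (G : PreLamGraph Node Name) : List Dir → Node → Node → Prop where
  | nil (n : Node) : Path G [] n n
  | abs {τ : List Dir} {n m b : Node} :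
      Path G τ n m → G.label m = .abs b → Path G (.body :: τ) n b
  | appL {τ : List Dir} {n m l r : Node} :
      Path G τ n m → G.label m = .app l r → Path G (.left :: τ) n l
  | appR {τ : List Dir} {n m l r : Node} :
      Path G τ n m → G.label m = .app l r → Path G (.right :: τ) n r

/-- `r` is a root: the only path ending at `r` is the empty path from `r` itself. -/
def Root (G : PreLamGraph Node Name) (r : Node) : Prop :=
  ∀ (τ : List Dir) (n : Node), G.Path τ n r → τ = []

/-- `Crosses G τ n p`: the path from `n` with trace `τ` crosses the node `p`. -/
inductive Crosses (G : PreLamGraph Node Name) : List Dir → Node → Node → Prop where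
  | here {τ : List Dir} {n p : Node} : G.Path τ n p → Crosses G τ n p
  | step {d : Dir} {τ : List Dir} {n p m : Node} :
      Crosses G τ n p → G.Path (d :: τ) n m → Crosses G (d :: τ) n p

/-- `m` dominates `n`: every path from a root to `n` crosses `m`. -/
def Dominates (G : PreLamGraph Node Name) (m n : Node) : Prop :=
  ∀ (r : Node) (τ : List Dir), G.Root r → G.Path τ r n → G.Crosses τ r m

/-- Acyclicity: a path from a node to itself must have empty trace. -/
def Acyclic (G : PreLamGraph Node Name) : Prop :=
  ∀ (n : Node) (τ : List Dir), G.Path τ n n → τ = []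

/-- Every bound variable node is dominated by its binder. -/
def Dominated (G : PreLamGraph Node Name) : Prop :=
  ∀ (n l : Node), G.label n = .bvar l → G.Dominates l n

/-- A query relates only root nodes. -/
def IsQuery (G : PreLamGraph Node Name) (Q : Node → Node → Prop) : Prop :=
  ∀ n m, Q n m → G.Root n ∧ G.Root m

/-- A relation is homogeneous if it only relates nodes of the same kind. -/
def Homogeneous (G : PreLamGraph Node Name) (R : Node → Node → Prop) : Prop :=
  ∀ n m, R n m → (G.label n).kind = (G.label m).kind

/-- Closure under the left propagation rule. -/
def ClosedAppL (G : PreLamGraph Node Name) (R : Node → Node → Prop) : Prop :=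
  ∀ n m n1 n2 m1 m2, G.label n = .app n1 n2 → G.label m = .app m1 m2 → R n m → R n1 m1

/-- Closure under the right propagation rule. -/
def ClosedAppR (G : PreLamGraph Node Name) (R : Node → Node → Prop) : Prop :=
  ∀ n m n1 n2 m1 m2, G.label n = .app n1 n2 → G.label m = .app m1 m2 → R n m → R n2 m2

/-- Closure under the body propagation rule. -/
def ClosedAbs (G : PreLamGraph Node Name) (R : Node → Node → Prop) : Prop :=
  ∀ n m n' m', G.label n = .abs n' → G.label m = .abs m' → R n m → R n' m'

/-- Closure under the scoping rule. -/
def ClosedScope (G : PreLamGraph Node Name) (R : Node → Node → Prop) : Prop :=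
  ∀ n m l l', G.label n = .bvar l → G.label m = .bvar l' → R n m → R l l'

/-- Closure under the three propagation rules. -/
def ClosedProp (G : PreLamGraph Node Name) (R : Node → Node → Prop) : Prop :=
  G.ClosedAppL R ∧ G.ClosedAppR R ∧ G.ClosedAbs R

/-- A blind bisimulation is a homogeneous relation closed under the propagation rules. -/
def BlindBisimulation (G : PreLamGraph Node Name) (R : Node → Node → Prop) : Prop :=
  G.Homogeneous R ∧ G.ClosedProp R

/-- A bisimulation is a homogeneous relation closed under the propagation rules
and the scoping rule. -/
def Bisimulation (G : PreLamGraph Node Name) (R : Node → Node → Prop) : Prop :=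
  G.BlindBisimulation R ∧ G.ClosedScope R

/-- A relation is open if whenever it relates two free variable nodes they are equal. -/
def OpenRel (G : PreLamGraph Node Name) (R : Node → Node → Prop) : Prop :=
  ∀ n m a b, G.label n = .fvar a → G.label m = .fvar b → R n m → n = m

/-- A sharing equivalence is an open bisimulation that is also an equivalence relation. -/
def SharingEquivalence (G : PreLamGraph Node Name) (R : Node → Node → Prop) : Prop :=
  G.OpenRel R ∧ G.Bisimulation R ∧ Equivalence R

/-- A blind sharing equivalence is an equivalence relation that is a blind bisimulation. -/
def BlindSharingEquivalence (G : PreLamGraph Node Name) (R : Node → Node → Prop) : Prop :=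
  Equivalence R ∧ G.BlindBisimulation R

/-- The propagation `R↓`: the smallest relation containing `R` and closed under the
propagation rules. -/
inductive Propagation (G : PreLamGraph Node Name) (R : Node → Node → Prop) :
    Node → Node → Prop where
  | base {n m : Node} : R n m → Propagation G R n m
  | appL {n m n1 n2 m1 m2 : Node} :
      Propagation G R n m → G.label n = .app n1 n2 → G.label m = .app m1 m2 →
      Propagation G R n1 m1
  | appR {n m n1 n2 m1 m2 : Node} :
      Propagation G R n m → G.label n = .app n1 n2 → G.label m = .app m1 m2 →
      Propagation G R n2 m2
  | abs {n m n' m' : Node} :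
      Propagation G R n m → G.label n = .abs n' → G.label m = .abs m' →
      Propagation G R n' m'

/-- The spreading `R⇓`: the smallest equivalence relation containing `R` and closed
under the propagation rules. -/
inductive Spreading (G : PreLamGraph Node Name) (R : Node → Node → Prop) :
    Node → Node → Prop where
  | base {n m : Node} : R n m → Spreading G R n m
  | refl (n : Node) : Spreading G R n n
  | symm {n m : Node} : Spreading G R n m → Spreading G R m n
  | trans {n m p : Node} : Spreading G R n m → Spreading G R m p → Spreading G R n p
  | appL {n m n1 n2 m1 m2 : Node} :
      Spreading G R n m → G.label n = .app n1 n2 → G.label m = .app m1 m2 →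
      Spreading G R n1 m1
  | appR {n m n1 n2 m1 m2 : Node} :
      Spreading G R n m → G.label n = .app n1 n2 → G.label m = .app m1 m2 →
      Spreading G R n2 m2
  | abs {n m n' m' : Node} :
      Spreading G R n m → G.label n = .abs n' → G.label m = .abs m' →
      Spreading G R n' m'

/-- `IndexOf G l n τ k`: the de Bruijn index of the abstraction node `l` along the path
from `n` with trace `τ` (which crosses `l`) is `k`. -/
inductive IndexOf (G : PreLamGraph Node Name) (l n : Node) : List Dir → ℕ → Prop where
  | here {τ : List Dir} : G.Path τ n l → IndexOf G l n τ 0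
  | abs {d : Dir} {τ : List Dir} {m b : Node} {k : ℕ} :
      G.Path (d :: τ) n m → G.label m = .abs b → m ≠ l →
      IndexOf G l n τ k → IndexOf G l n (d :: τ) (k + 1)
  | other {d : Dir} {τ : List Dir} {m : Node} {k : ℕ} :
      G.Path (d :: τ) n m → (∀ b, G.label m ≠ .abs b) →
      IndexOf G l n τ k → IndexOf G l n (d :: τ) k

/-- `Readback G r τ t`: the readback of the endpoint of the access path from `r` with
trace `τ` is the locally nameless term `t`. -/
inductive Readback (G : PreLamGraph Node Name) (r : Node) : List Dir → Term Name → Prop where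
  | bvar {τ : List Dir} {n l : Node} {k : ℕ} :
      G.Path τ r n → G.label n = .bvar l → G.IndexOf l r τ k →
      Readback G r τ (.bvar k)
  | fvar {τ : List Dir} {n : Node} {a : Name} :
      G.Path τ r n → G.label n = .fvar a → Readback G r τ (.fvar a)
  | abs {τ : List Dir} {n b : Node} {t : Term Name} :
      G.Path τ r n → G.label n = .abs b → Readback G r (.body :: τ) t →
      Readback G r τ (.lam t)
  | app {τ : List Dir} {n n1 n2 : Node} {t1 t2 : Term Name} :
      G.Path τ r n → G.label n = .app n1 n2 →
      Readback G r (.left :: τ) t1 → Readback G r (.right :: τ) t2 →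
      Readback G r τ (.app t1 t2)

end PreLamGraph

/-- A λ-graph: a finite, acyclic and dominated pre–λ-graph. -/
structure LamGraph (Node Name : Type) extends PreLamGraph Node Name where
  finite : Finite Node
  acyclic : toPreLamGraph.Acyclic
  dominated : toPreLamGraph.Dominated

namespace PreLamGraph

variable {Node Name : Type} {G : PreLamGraph Node Name}

theorem path_nil_eq {a b : Node} (h : G.Path [] a b) : a = b := by cases h; rfl

theorem path_det {τ : List Dir} {a x y : Node} (h1 : G.Path τ a x) (h2 : G.Path τ a y) :
    x = y := by
  induction h1 generalizing y with
  | nil => cases h2; rfl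
  | abs p hm ih =>
    cases h2 with
    | abs p' hm' =>
      cases ih p'
      rw [hm] at hm'
      exact NodeLabel.abs.inj hm'
  | appL p hm ih =>
    cases h2 with
    | appL p' hm' =>
      cases ih p'
      rw [hm] at hm'
      exact (NodeLabel.app.inj hm').1
  | appR p hm ih =>
    cases h2 with
    | appR p' hm' =>
      cases ih p'
      rw [hm] at hm'
      exact (NodeLabel.app.inj hm').2

theorem path_comp' {γ : List Dir} {b c : Node} (h2 : G.Path γ b c) :
    ∀ {σ : List Dir} {a : Node}, G.Path σ a b → G.Path (γ ++ σ) a c := by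
  induction h2 with
  | nil => exact fun h1 => h1
  | abs p hm ih => exact fun h1 => .abs (ih h1) hm
  | appL p hm ih => exact fun h1 => .appL (ih h1) hm
  | appR p hm ih => exact fun h1 => .appR (ih h1) hm

theorem path_comp {σ γ : List Dir} {a b c : Node} (h1 : G.Path σ a b) (h2 : G.Path γ b c) :
    G.Path (γ ++ σ) a c := path_comp' h2 h1

theorem path_decomp {γ σ : List Dir} {a c : Node} (h : G.Path (γ ++ σ) a c) :
    ∃ b, G.Path σ a b ∧ G.Path γ b c := by
  induction γ generalizing c with
  | nil => exact ⟨c, h, .nil c⟩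
  | cons d γ ih =>
    cases h with
    | abs p hm => obtain ⟨b, h1, h2⟩ := ih p; exact ⟨b, h1, .abs h2 hm⟩
    | appL p hm => obtain ⟨b, h1, h2⟩ := ih p; exact ⟨b, h1, .appL h2 hm⟩
    | appR p hm => obtain ⟨b, h1, h2⟩ := ih p; exact ⟨b, h1, .appR h2 hm⟩

theorem crosses_decomp {τ : List Dir} {a p : Node} (h : G.Crosses τ a p) :
    ∃ γ σ, τ = γ ++ σ ∧ G.Path σ a p := by
  induction h with
  | here hp => exact ⟨[], _, rfl, hp⟩
  | @step d τ n p m hc hp ih =>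
    obtain ⟨γ, σ, rfl, h1⟩ := ih
    exact ⟨d :: γ, σ, rfl, h1⟩

theorem label_of_kind_app {m : Node} (h : (G.label m).kind = .app) :
    ∃ a b, G.label m = .app a b := by
  cases hm : G.label m
  case app a b => exact ⟨a, b, rfl⟩
  all_goals rw [hm] at h; simp [NodeLabel.kind] at h

theorem label_of_kind_abs {m : Node} (h : (G.label m).kind = .abs) :
    ∃ b, G.label m = .abs b := by
  cases hm : G.label m
  case abs b => exact ⟨b, rfl⟩
  all_goals rw [hm] at h; simp [NodeLabel.kind] at h

theorem label_of_kind_fvar {m : Node} (h : (G.label m).kind = .fvar) :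
    ∃ a, G.label m = .fvar a := by
  cases hm : G.label m
  case fvar a => exact ⟨a, rfl⟩
  all_goals rw [hm] at h; simp [NodeLabel.kind] at h

theorem label_of_kind_bvar {m : Node} (h : (G.label m).kind = .bvar) :
    ∃ l, G.label m = .bvar l := by
  cases hm : G.label m
  case bvar l => exact ⟨l, rfl⟩
  all_goals rw [hm] at h; simp [NodeLabel.kind] at h

theorem transfer {S : Node → Node → Prop} (hh : G.Homogeneous S)
    (hL : G.ClosedAppL S) (hR : G.ClosedAppR S) (hA : G.ClosedAbs S)
    {a b x : Node} {τ : List Dir} (hab : S a b) (hp : G.Path τ a x) :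
    ∃ y, G.Path τ b y ∧ S x y := by
  induction hp with
  | nil => exact ⟨b, .nil b, hab⟩
  | @abs τ n m x' p hm ih =>
    obtain ⟨y0, py, hs⟩ := ih hab
    obtain ⟨y, hy⟩ := label_of_kind_abs (G := G) (by rw [← hh _ _ hs, hm]; rfl)
    exact ⟨y, .abs py hy, hA _ _ _ _ hm hy hs⟩
  | @appL τ n m x' r p hm ih =>
    obtain ⟨y0, py, hs⟩ := ih hab
    obtain ⟨y1, y2, hy⟩ := label_of_kind_app (G := G) (by rw [← hh _ _ hs, hm]; rfl)
    exact ⟨y1, .appL py hy, hL _ _ _ _ _ _ hm hy hs⟩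
  | @appR τ n m l x' p hm ih =>
    obtain ⟨y0, py, hs⟩ := ih hab
    obtain ⟨y1, y2, hy⟩ := label_of_kind_app (G := G) (by rw [← hh _ _ hs, hm]; rfl)
    exact ⟨y2, .appR py hy, hR _ _ _ _ _ _ hm hy hs⟩

theorem transfer' {S : Node → Node → Prop} (hh : G.Homogeneous S)
    (hL : G.ClosedAppL S) (hR : G.ClosedAppR S) (hA : G.ClosedAbs S)
    {a b y : Node} {τ : List Dir} (hab : S a b) (hp : G.Path τ b y) :
    ∃ x, G.Path τ a x ∧ S x y := by
  obtain ⟨x, px, hs⟩ := transfer (S := fun u v => S v u)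
    (fun n m h => (hh m n h).symm)
    (fun n m n1 n2 m1 m2 h1 h2 h => hL m n m1 m2 n1 n2 h2 h1 h)
    (fun n m n1 n2 m1 m2 h1 h2 h => hR m n m1 m2 n1 n2 h2 h1 h)
    (fun n m n' m' h1 h2 h => hA m n m' n' h2 h1 h) hab hp
  exact ⟨x, px, hs⟩

/-- `k`-fold iteration of a trace. -/
def powTr (δ : List Dir) : ℕ → List Dir
  | 0 => []
  | k + 1 => δ ++ powTr δ k

theorem powTr_add (δ : List Dir) (m n : ℕ) :
    powTr δ (m + n) = powTr δ m ++ powTr δ n := by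
  induction m with
  | zero => simp [powTr]
  | succ k ih =>
    have : k + 1 + n = (k + n) + 1 := by omega
    rw [this]
    simp [powTr, ih]

theorem no_cycle {S : Node → Node → Prop} (hfin : Finite Node) (hac : G.Acyclic)
    (heq : Equivalence S) (hh : G.Homogeneous S)
    (hL : G.ClosedAppL S) (hR : G.ClosedAppR S) (hA : G.ClosedAbs S)
    {a b : Node} {δ : List Dir} (hab : S a b) (hp : G.Path δ a b) : δ = [] := by
  by_contra hδ
  have inv : ∀ k : ℕ, ∃ w, G.Path (powTr δ k) a w ∧ S a w := by
    intro k
    induction k with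
    | zero => exact ⟨a, .nil a, heq.refl a⟩
    | succ k ih =>
      obtain ⟨w, pw, sw⟩ := ih
      obtain ⟨y, py, sy⟩ := transfer hh hL hR hA sw hp
      exact ⟨y, path_comp pw py, heq.trans hab sy⟩
  choose f pf _ using inv
  have := hfin
  obtain ⟨i, j, hij, hfij⟩ := Finite.exists_ne_map_eq_of_infinite f
  have key : ∀ i j : ℕ, i < j → f i = f j → False := by
    intro i j hlt hf
    have h1 : G.Path (powTr δ (j - i) ++ powTr δ i) a (f j) := by
      rw [← powTr_add, show j - i + i = j from by omega]
      exact pf j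
    obtain ⟨b', pb1, pb2⟩ := path_decomp h1
    have hb : b' = f i := path_det pb1 (pf i)
    subst hb
    rw [hf] at pb2
    have hnil := hac _ _ pb2
    obtain ⟨k, hk⟩ : ∃ k, j - i = k + 1 := ⟨j - i - 1, by omega⟩
    rw [hk] at hnil
    simp only [powTr, List.append_eq_nil_iff] at hnil
    exact hδ hnil.1
  rcases lt_trichotomy i j with h | h | h
  · exact key i j h hfij
  · exact hij h
  · exact key j i h hfij.symm

theorem prop_decomp {Q : Node → Node → Prop} {n m : Node}
    (h : Propagation G Q n m) :
    ∃ r r' τ, Q r r' ∧ G.Path τ r n ∧ G.Path τ r' m := by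
  induction h with
  | base h => exact ⟨_, _, [], h, .nil _, .nil _⟩
  | appL h hn hm ih =>
    obtain ⟨r, r', τ, hq, p1, p2⟩ := ih
    exact ⟨r, r', _, hq, .appL p1 hn, .appL p2 hm⟩
  | appR h hn hm ih =>
    obtain ⟨r, r', τ, hq, p1, p2⟩ := ih
    exact ⟨r, r', _, hq, .appR p1 hn, .appR p2 hm⟩
  | abs h hn hm ih =>
    obtain ⟨r, r', τ, hq, p1, p2⟩ := ih
    exact ⟨r, r', _, hq, .abs p1 hn, .abs p2 hm⟩

theorem prop_closedAppL (Q : Node → Node → Prop) : G.ClosedAppL (Propagation G Q) :=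
  fun _ _ _ _ _ _ hn hm h => h.appL hn hm

theorem prop_closedAppR (Q : Node → Node → Prop) : G.ClosedAppR (Propagation G Q) :=
  fun _ _ _ _ _ _ hn hm h => h.appR hn hm

theorem prop_closedAbs (Q : Node → Node → Prop) : G.ClosedAbs (Propagation G Q) :=
  fun _ _ _ _ hn hm h => h.abs hn hm

theorem rst_homog {S : Node → Node → Prop} (hh : G.Homogeneous S) :
    G.Homogeneous (RstClosure S) := by
  intro n m h
  induction h with
  | base h => exact hh _ _ h
  | refl a => rfl
  | symm h ih => exact ih.symm
  | trans h1 h2 ih1 ih2 => exact ih1.trans ih2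

theorem rst_appL {S : Node → Node → Prop} (hh : G.Homogeneous S) (hL : G.ClosedAppL S)
    {n m : Node} (h : RstClosure S n m) :
    ∀ n1 n2 m1 m2, G.label n = .app n1 n2 → G.label m = .app m1 m2 →
      RstClosure S n1 m1 := by
  induction h with
  | base h => exact fun n1 n2 m1 m2 hn hm => .base (hL _ _ _ _ _ _ hn hm h)
  | refl a =>
    intro n1 n2 m1 m2 hn hm
    rw [hn] at hm; injection hm with h1 h2
    exact h1 ▸ .refl n1
  | symm h ih => exact fun n1 n2 m1 m2 hn hm => .symm (ih m1 m2 n1 n2 hm hn)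
  | @trans a b c h1 h2 ih1 ih2 =>
    intro n1 n2 m1 m2 hn hm
    obtain ⟨b1, b2, hb⟩ := label_of_kind_app (G := G)
      (by rw [← rst_homog hh _ _ h1, hn]; rfl)
    exact .trans (ih1 _ _ _ _ hn hb) (ih2 _ _ _ _ hb hm)

theorem rst_appR {S : Node → Node → Prop} (hh : G.Homogeneous S) (hR : G.ClosedAppR S)
    {n m : Node} (h : RstClosure S n m) :
    ∀ n1 n2 m1 m2, G.label n = .app n1 n2 → G.label m = .app m1 m2 →
      RstClosure S n2 m2 := by
  induction h with
  | base h => exact fun n1 n2 m1 m2 hn hm => .base (hR _ _ _ _ _ _ hn hm h)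
  | refl a =>
    intro n1 n2 m1 m2 hn hm
    rw [hn] at hm; injection hm with h1 h2
    exact h2 ▸ .refl n2
  | symm h ih => exact fun n1 n2 m1 m2 hn hm => .symm (ih m1 m2 n1 n2 hm hn)
  | @trans a b c h1 h2 ih1 ih2 =>
    intro n1 n2 m1 m2 hn hm
    obtain ⟨b1, b2, hb⟩ := label_of_kind_app (G := G)
      (by rw [← rst_homog hh _ _ h1, hn]; rfl)
    exact .trans (ih1 _ _ _ _ hn hb) (ih2 _ _ _ _ hb hm)

theorem rst_abs {S : Node → Node → Prop} (hh : G.Homogeneous S) (hA : G.ClosedAbs S)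
    {n m : Node} (h : RstClosure S n m) :
    ∀ n' m', G.label n = .abs n' → G.label m = .abs m' → RstClosure S n' m' := by
  induction h with
  | base h => exact fun n' m' hn hm => .base (hA _ _ _ _ hn hm h)
  | refl a =>
    intro n' m' hn hm
    rw [hn] at hm; injection hm with h1
    exact h1 ▸ .refl n'
  | symm h ih => exact fun n' m' hn hm => .symm (ih m' n' hm hn)
  | @trans a b c h1 h2 ih1 ih2 =>
    intro n' m' hn hm
    obtain ⟨b', hb⟩ := label_of_kind_abs (G := G)
      (by rw [← rst_homog hh _ _ h1, hn]; rfl)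
    exact .trans (ih1 _ _ hn hb) (ih2 _ _ hb hm)

theorem rst_scope {S : Node → Node → Prop} (hh : G.Homogeneous S) (hsc : G.ClosedScope S)
    {n m : Node} (h : RstClosure S n m) :
    ∀ l l', G.label n = .bvar l → G.label m = .bvar l' → RstClosure S l l' := by
  induction h with
  | base h => exact fun l l' hn hm => .base (hsc _ _ _ _ hn hm h)
  | refl a =>
    intro l l' hn hm
    rw [hn] at hm; injection hm with h1
    exact h1 ▸ .refl l
  | symm h ih => exact fun l l' hn hm => .symm (ih l' l hm hn)
  | @trans a b c h1 h2 ih1 ih2 =>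
    intro l l' hn hm
    obtain ⟨lb, hb⟩ := label_of_kind_bvar (G := G)
      (by rw [← rst_homog hh _ _ h1, hn]; rfl)
    exact .trans (ih1 _ _ hn hb) (ih2 _ _ hb hm)

theorem rst_open {S : Node → Node → Prop} (hh : G.Homogeneous S) (ho : G.OpenRel S)
    {n m : Node} (h : RstClosure S n m) :
    ∀ a b, G.label n = .fvar a → G.label m = .fvar b → n = m := by
  induction h with
  | base h => exact fun a b hn hm => ho _ _ a b hn hm h
  | refl a => exact fun _ _ _ _ => rfl
  | symm h ih => exact fun a b hn hm => (ih b a hm hn).symm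
  | @trans a b c h1 h2 ih1 ih2 =>
    intro a' b' hn hm
    obtain ⟨cb, hb⟩ := label_of_kind_fvar (G := G)
      (by rw [← rst_homog hh _ _ h1, hn]; rfl)
    exact (ih1 _ _ hn hb).trans (ih2 _ _ hb hm)

theorem prop_sub_spread {Q : Node → Node → Prop} {n m : Node}
    (h : Propagation G Q n m) : Spreading G Q n m := by
  induction h with
  | base h => exact .base h
  | appL h hn hm ih => exact ih.appL hn hm
  | appR h hn hm ih => exact ih.appR hn hm
  | abs h hn hm ih => exact ih.abs hn hm

theorem rst_sub_spread {Q : Node → Node → Prop} {n m : Node}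
    (h : RstClosure (Propagation G Q) n m) : Spreading G Q n m := by
  induction h with
  | base h => exact prop_sub_spread h
  | refl a => exact .refl a
  | symm h ih => exact ih.symm
  | trans h1 h2 ih1 ih2 => exact ih1.trans ih2

theorem spread_sub_rst {Q : Node → Node → Prop}
    (hh : G.Homogeneous (Propagation G Q)) {n m : Node}
    (h : Spreading G Q n m) : RstClosure (Propagation G Q) n m := by
  induction h with
  | base h => exact .base (.base h)
  | refl n => exact .refl n
  | symm h ih => exact .symm ih
  | trans h1 h2 ih1 ih2 => exact .trans ih1 ih2
  | appL h hn hm ih => exact rst_appL hh (prop_closedAppL Q) ih _ _ _ _ hn hm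
  | appR h hn hm ih => exact rst_appR hh (prop_closedAppR Q) ih _ _ _ _ hn hm
  | abs h hn hm ih => exact rst_abs hh (prop_closedAbs Q) ih _ _ hn hm

theorem suffix_total {α : Type _} :
    ∀ (γ γ' σ σ' : List α), γ ++ σ = γ' ++ σ' →
      (∃ δ, σ = δ ++ σ') ∨ (∃ δ, σ' = δ ++ σ) := by
  intro γ
  induction γ with
  | nil => exact fun γ' σ σ' h => .inl ⟨γ', h⟩
  | cons d γ ih =>
    intro γ' σ σ' h
    cases γ' with
    | nil => exact .inr ⟨d :: γ, h.symm⟩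
    | cons d' γ' =>
      injection h with h1 h2
      exact ih γ' σ σ' h2

end PreLamGraph

open PreLamGraph in
/-- `Q↓` is an open bisimulation iff `Q⇓` is a sharing equivalence. -/
theorem propagation_open_bisim_iff_spreading_sharing_equivalence
    {Node Name : Type} (G : LamGraph Node Name)
    (Q : Node → Node → Prop) (hQ : G.toPreLamGraph.IsQuery Q) :
    (G.toPreLamGraph.OpenRel (Propagation G.toPreLamGraph Q) ∧
      G.toPreLamGraph.Bisimulation (Propagation G.toPreLamGraph Q)) ↔
      G.toPreLamGraph.SharingEquivalence (Spreading G.toPreLamGraph Q) := by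
  constructor
  · rintro ⟨hopen, ⟨⟨hhom, hL, hR, hA⟩, hscope⟩⟩
    have hsr : ∀ {n m}, Spreading G.toPreLamGraph Q n m →
        RstClosure (Propagation G.toPreLamGraph Q) n m := fun h => spread_sub_rst hhom h
    refine ⟨?_, ⟨⟨?_, ?_, ?_, ?_⟩, ?_⟩, ?_⟩
    · intro n m a b hn hm h
      exact rst_open hhom hopen (hsr h) a b hn hm
    · intro n m h
      exact rst_homog hhom _ _ (hsr h)
    · exact fun n m n1 n2 m1 m2 hn hm h => h.appL hn hm
    · exact fun n m n1 n2 m1 m2 hn hm h => h.appR hn hm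
    · exact fun n m n' m' hn hm h => h.abs hn hm
    · intro n m l l' hn hm h
      exact rst_sub_spread (rst_scope hhom hscope (hsr h) l l' hn hm)
    · exact ⟨fun n => .refl n, fun h => h.symm, fun h1 h2 => h1.trans h2⟩
  · rintro ⟨hopen, ⟨⟨⟨hhom, hL, hR, hA⟩, hscope⟩, heq⟩⟩
    have hps : ∀ {n m}, Propagation G.toPreLamGraph Q n m →
        Spreading G.toPreLamGraph Q n m := fun h => prop_sub_spread h
    have phom : G.toPreLamGraph.Homogeneous (Propagation G.toPreLamGraph Q) :=
      fun n m h => hhom _ _ (hps h)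
    refine ⟨?_, ⟨⟨phom, prop_closedAppL Q, prop_closedAppR Q, prop_closedAbs Q⟩, ?_⟩⟩
    · intro n m a b hn hm h
      exact hopen n m a b hn hm (hps h)
    · -- scoping closure of the propagation
      intro n m l l' hn hm hnm
      have hSll' : Spreading G.toPreLamGraph Q l l' := hscope n m l l' hn hm (hps hnm)
      obtain ⟨r, r', τ, hq, pr, pr'⟩ := prop_decomp hnm
      obtain ⟨hr, hr'⟩ := hQ r r' hq
      obtain ⟨γ, σ, hτ, pσ⟩ := crosses_decomp (G.dominated n l hn r τ hr pr)
      obtain ⟨γ', σ', hτ', pσ'⟩ := crosses_decomp (G.dominated m l' hm r' τ hr' pr')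
      have hPrr' : Propagation G.toPreLamGraph Q r r' := .base hq
      rcases suffix_total γ γ' σ σ' (hτ ▸ hτ') with ⟨δ, hδ⟩ | ⟨δ, hδ⟩
      · -- σ = δ ++ σ'
        subst hδ
        obtain ⟨z, pz, hz⟩ := transfer' phom (prop_closedAppL Q) (prop_closedAppR Q)
          (prop_closedAbs Q) hPrr' pσ'
        obtain ⟨b, pb1, pb2⟩ := path_decomp pσ
        rw [path_det pb1 pz] at pb2
        have hSzl : Spreading G.toPreLamGraph Q z l :=
          heq.trans (hps hz) (heq.symm hSll')
        have hnil : δ = [] := no_cycle G.finite G.acyclic heq hhom hL hR hA hSzl pb2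
        subst hnil
        have : z = l := path_nil_eq pb2
        subst this
        exact hz
      · -- σ' = δ ++ σ
        subst hδ
        obtain ⟨y, py, hy⟩ := transfer phom (prop_closedAppL Q) (prop_closedAppR Q)
          (prop_closedAbs Q) hPrr' pσ
        obtain ⟨b, pb1, pb2⟩ := path_decomp pσ'
        rw [path_det pb1 py] at pb2
        have hSyl' : Spreading G.toPreLamGraph Q y l' :=
          heq.trans (heq.symm (hps hy)) hSll'
        have hnil : δ = [] := no_cycle G.finite G.acyclic heq hhom hL hR hA hSyl' pb2
        subst hnil
        have : y = l' := path_nil_eq pb2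
        subst this
        exact hy
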